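/- arXiv:1509.05124 — 3 statements merged into one kernel-verified Lean document; each statement's English description precedes it below -/
import Mathlib

section
/- With notation as in the closed-loop system, if R_c is symmetric (R_c = R_c^T), then the characteristic polynomial of the block matrix 𝒜 = [[A, B₂H + 2Θ R_c], [G₁C + 2Θ R_c^T, A − G₁C + B₂H]] factors as det(sI − 𝒜) = det(sI − A − B₂H − 2Θ R_c) · det(sI − A + G₁C + 2Θ R_c). -/
open Matrix Kronecker

def Jmat : Matrix (Fin 2) (Fin 2) ℝ := !![0, 1; -1, 0]

/-- `Θ_n = I_{n/2} ⊗ J`, realized on the index type `Fin m × Fin 2` (so `n = 2m`). -/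
def Theta (m : ℕ) : Matrix (Fin m × Fin 2) (Fin m × Fin 2) ℝ :=
  (1 : Matrix (Fin m) (Fin m) ℝ) ⊗ₖ Jmat

set_option maxHeartbeats 1600000 in
/-- If `R_c` is symmetric then the characteristic polynomial of the closed-loop matrix
factors as the product of the regulator and observer characteristic polynomials. -/
theorem closed_loop_charpoly_factors (m p q : ℕ)
    (A : Matrix (Fin m × Fin 2) (Fin m × Fin 2) ℝ)
    (G₁ : Matrix (Fin m × Fin 2) (Fin p × Fin 2) ℝ)
    (C : Matrix (Fin p × Fin 2) (Fin m × Fin 2) ℝ)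
    (B₂ : Matrix (Fin m × Fin 2) (Fin q × Fin 2) ℝ)
    (H : Matrix (Fin q × Fin 2) (Fin m × Fin 2) ℝ)
    (Rc : Matrix (Fin m × Fin 2) (Fin m × Fin 2) ℝ) (hRc : Rc = Rcᵀ) (s : ℝ) :
    (s • (1 : Matrix ((Fin m × Fin 2) ⊕ (Fin m × Fin 2)) ((Fin m × Fin 2) ⊕ (Fin m × Fin 2)) ℝ) -
        fromBlocks A (B₂ * H + 2 • (Theta m * Rc)) (G₁ * C + 2 • (Theta m * Rcᵀ))
          (A - G₁ * C + B₂ * H)).det =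
      (s • (1 : Matrix (Fin m × Fin 2) (Fin m × Fin 2) ℝ)
          - A - B₂ * H - 2 • (Theta m * Rc)).det *
      (s • (1 : Matrix (Fin m × Fin 2) (Fin m × Fin 2) ℝ)
          - A + G₁ * C + 2 • (Theta m * Rc)).det := by
  rw [← hRc]
  set X := B₂ * H + 2 • (Theta m * Rc) with hX
  set Y := G₁ * C + 2 • (Theta m * Rc) with hY
  set S := s • (1 : Matrix (Fin m × Fin 2) (Fin m × Fin 2) ℝ) with hS
  have key :
      s • (1 : Matrix ((Fin m × Fin 2) ⊕ (Fin m × Fin 2)) ((Fin m × Fin 2) ⊕ (Fin m × Fin 2)) ℝ) -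
        fromBlocks A X Y (A - G₁ * C + B₂ * H) =
      fromBlocks 1 0 1 1 * fromBlocks (S - A - X) (-X) 0 (S - A + Y) *
        fromBlocks 1 0 (-1) 1 := by
    rw [fromBlocks_multiply, fromBlocks_multiply, ← fromBlocks_one, fromBlocks_smul,
      sub_eq_add_neg, fromBlocks_neg, fromBlocks_add]
    rw [fromBlocks_inj]
    refine ⟨?_, ?_, ?_, ?_⟩ <;>
      simp only [Matrix.mul_one, Matrix.one_mul, Matrix.mul_zero, Matrix.zero_mul,
        Matrix.mul_neg, Matrix.neg_mul, smul_zero, ← hS, hX, hY] <;>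
      abel
  rw [key, det_mul, det_mul, det_fromBlocks_zero₂₁, det_fromBlocks_zero₁₂]
  simp only [det_one, one_mul, mul_one]
  have h1 : S - A - X = S - A - B₂ * H - 2 • (Theta m * Rc) := by rw [hX]; abel
  have h2 : S - A + Y = S - A + G₁ * C + 2 • (Theta m * Rc) := by rw [hY]; abel
  rw [h1, h2, det_fromBlocks_zero₁₂]
  simp
end

section
/- Conversely, if for all s the characteristic polynomial of 𝒜 = [[A, B₂H + 2Θ R_c], [G₁C + 2Θ R_c^T, A − G₁C + B₂H]] equals det(sI − A − B₂H − 2Θ R_c)·det(sI − A + G₁C + 2Θ R_c) for all choices of A, B₂H, G₁C, then the off-diagonal error-coupling block 2Θ(R_c − R_c^T) in the transformed coordinates must vanish, i.e., R_c = R_c^T (using that Θ is invertible). -/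
/-!
In the error coordinates `(x, x - x̂)` the closed-loop matrix becomes
`𝒜_e = [[A + K + T, -(K + T)], [T - T', A - L - T]]` with `T = 2ΘR_c`, `T' = 2ΘR_cᵀ`.
Choosing `A, K, L` so that both diagonal blocks vanish and the upper-right block is an arbitrary
`-W`, the factorization at `s = 1` reads `det (1 + (T - T') W) = 1` for every `W`. For the
rank-one `W = e_q e_pᵀ` the matrix determinant lemma turns this into `(T - T')_pq = 0`, so
`Θ(R_c - R_cᵀ) = 0`, and `Θ² = -1` gives `R_c = R_cᵀ`.
-/

open Matrix Kronecker

namespace Matrix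

variable {n R : Type*} [DecidableEq n] [CommRing R]

theorem smul_one_sub_fromBlocks (s : R) (X Z D Y : Matrix n n R) :
    s • 1 - fromBlocks X Z D Y = fromBlocks (s • 1 - X) (-Z) (-D) (s • 1 - Y) := by
  rw [← fromBlocks_one, fromBlocks_smul, sub_eq_add_neg, fromBlocks_neg, fromBlocks_add]
  simp only [smul_zero, zero_add, sub_eq_add_neg]

variable [Fintype n]

theorem eq_zero_of_forall_det_one_add_mul_eq_one {D : Matrix n n R}
    (h : ∀ W : Matrix n n R, det (1 + D * W) = 1) : D = 0 := by
  ext p q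
  have hpq := h (vecMulVec (Pi.single q 1) (Pi.single p 1))
  rw [mul_vecMulVec, vecMulVec_eq Unit, det_one_add_replicateCol_mul_replicateRow,
    mulVec_single_one, single_dotProduct, one_mul] at hpq
  simpa using hpq

theorem eq_zero_of_forall_det_fromBlocks_one_eq_one {D : Matrix n n R}
    (h : ∀ W : Matrix n n R, det (fromBlocks 1 W D 1) = 1) : D = 0 :=
  eq_zero_of_forall_det_one_add_mul_eq_one fun W => by
    rw [← h (-W), det_fromBlocks_one₁₁, Matrix.mul_neg, sub_neg_eq_add]

theorem det_smul_one_sub_conj_of_mul_self_eq_one {P : Matrix n n R} (hP : P * P = 1) (s : R)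
    (N : Matrix n n R) : det (s • 1 - P * N * P) = det (s • 1 - N) := by
  have hconj : P * (s • 1 - N) * P = s • 1 - P * N * P := by
    rw [Matrix.mul_sub, Matrix.sub_mul, Matrix.mul_smul, Matrix.smul_mul, Matrix.mul_one, hP]
  rw [← hconj, det_mul, det_mul, mul_right_comm, ← det_mul, hP, det_one, one_mul]

theorem fromBlocks_conj_fromBlocks_one_zero_one_neg_one (X Z D Y : Matrix n n R) :
    fromBlocks 1 0 1 (-1) * fromBlocks X Z D Y * fromBlocks 1 0 1 (-1) =
      fromBlocks (X + Z) (-Z) (X + Z - D - Y) (Y - Z) := by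
  simp only [fromBlocks_multiply, Matrix.one_mul, Matrix.mul_one, Matrix.zero_mul,
    Matrix.mul_zero, Matrix.neg_mul, Matrix.mul_neg, add_zero, zero_add]
  congr 1 <;> abel

end Matrix

theorem det_closedLoop_eq_det_errorCoordinates {n R : Type*} [Fintype n] [DecidableEq n]
    [CommRing R] (s : R) (A K L T T' : Matrix n n R) :
    det (s • 1 - fromBlocks A (K + T) (L + T') (A - L + K)) =
      det (s • 1 - fromBlocks (A + K + T) (-(K + T)) (T - T') (A - L - T)) := by
  have hP : (fromBlocks 1 0 1 (-1) : Matrix (n ⊕ n) (n ⊕ n) R) * fromBlocks 1 0 1 (-1) = 1 := by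
    simp [fromBlocks_multiply, ← fromBlocks_one]
  rw [← det_smul_one_sub_conj_of_mul_self_eq_one hP,
    fromBlocks_conj_fromBlocks_one_zero_one_neg_one]
  congr 3 <;> abel

theorem Theta_mul_self (m : ℕ) : Theta m * Theta m = -1 := by
  have hJ : Jmat * Jmat = -1 := by
    ext i j
    fin_cases i <;> fin_cases j <;> simp [Jmat, Matrix.mul_apply, Fin.sum_univ_two]
  rw [Theta, ← mul_kronecker_mul, one_mul, hJ, ← neg_one_smul ℝ (1 : Matrix (Fin 2) (Fin 2) ℝ),
    kronecker_smul, one_kronecker_one, neg_one_smul]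

theorem eq_zero_of_Theta_mul_eq_zero {m : ℕ} {X : Matrix (Fin m × Fin 2) (Fin m × Fin 2) ℝ}
    (h : Theta m * X = 0) : X = 0 := by
  simpa [← Matrix.mul_assoc, Theta_mul_self] using congrArg (Theta m * ·) h

/-- Converse direction: if the closed-loop characteristic polynomial factors as the
product of the regulator and observer characteristic polynomials for all choices of
`A`, `K = B₂H`, `L = G₁C` (and all `s`), then `R_c` must be symmetric. -/
theorem charpoly_factorization_forces_symm (m : ℕ)
    (Rc : Matrix (Fin m × Fin 2) (Fin m × Fin 2) ℝ)
    (hfac : ∀ (A K L : Matrix (Fin m × Fin 2) (Fin m × Fin 2) ℝ) (s : ℝ),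
      (s • (1 : Matrix ((Fin m × Fin 2) ⊕ (Fin m × Fin 2)) ((Fin m × Fin 2) ⊕ (Fin m × Fin 2)) ℝ) -
          fromBlocks A (K + 2 • (Theta m * Rc)) (L + 2 • (Theta m * Rcᵀ))
            (A - L + K)).det =
        (s • (1 : Matrix (Fin m × Fin 2) (Fin m × Fin 2) ℝ)
            - A - K - 2 • (Theta m * Rc)).det *
        (s • (1 : Matrix (Fin m × Fin 2) (Fin m × Fin 2) ℝ)
            - A + L + 2 • (Theta m * Rc)).det) :
    Rc = Rcᵀ := by
  set T := 2 • (Theta m * Rc)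
  set T' := 2 • (Theta m * Rcᵀ)
  have hcoupling : -(T - T') = 0 := eq_zero_of_forall_det_fromBlocks_one_eq_one fun W => by
    have h := hfac (-W) (W - T) (-W - T) 1
    rw [det_closedLoop_eq_det_errorCoordinates, smul_one_sub_fromBlocks] at h
    simp only [one_smul] at h
    convert h using 2
    · congr 1 <;> abel
    · rw [show 1 - -W - (W - T) - T = 1 by abel, show 1 - -W + (-W - T) + T = 1 by abel,
        det_one, one_mul]
  have hT : T - T' = 2 • (Theta m * (Rc - Rcᵀ)) := by rw [Matrix.mul_sub, smul_sub]
  rw [neg_eq_zero, hT, ← Nat.cast_smul_eq_nsmul ℝ, smul_eq_zero, Nat.cast_ofNat] at hcoupling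
  exact sub_eq_zero.mp (eq_zero_of_Theta_mul_eq_zero (hcoupling.resolve_left two_ne_zero))
end

section
/- If (A − 2Θ R_c, C) is detectable (i.e., there exists G₁ with A − G₁C − 2Θ R_c Hurwitz) and (A + 2Θ R_c, B₂) is controllable, then for any monic real polynomial p of degree n there exist matrices G₁ and H such that the 2n×2n closed-loop matrix 𝒜 = [[A, B₂H + 2Θ R_c], [G₁C + 2Θ R_c^T, A − G₁C + B₂H]] (with R_c symmetric) has characteristic polynomial p(s)·det(sI − A + G₁C + 2Θ R_c), where A + B₂H + 2Θ R_c has characteristic polynomial p and A − G₁C − 2Θ R_c is Hurwitz. -/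
open Matrix Kronecker Polynomial


/-- A real square matrix is Hurwitz if all its (complex) eigenvalues have
strictly negative real part. -/
def IsHurwitz {ι : Type*} [Fintype ι] [DecidableEq ι] (M : Matrix ι ι ℝ) : Prop :=
  ∀ z ∈ spectrum ℂ (M.map (Complex.ofReal)), z.re < 0

/-- `(M, B)` is controllable: the controllability matrix `[B, MB, …, M^{n-1}B]`
has full row rank `n`. -/
def Controllable {ι κ : Type*} [Fintype ι] [Fintype κ] [DecidableEq ι]
    (M : Matrix ι ι ℝ) (B : Matrix ι κ ℝ) : Prop :=
  (Matrix.of (fun (i : ι) (jk : Fin (Fintype.card ι) × κ) =>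
    (M ^ (jk.1 : ℕ) * B) i jk.2)).rank = Fintype.card ι

/-!
Write `F = A + B₂H + 2ΘR_c` and `E = A − G₁C − 2ΘR_c`. As `R_c` is symmetric, both block rows of
the closed-loop matrix sum to `F`, so the diagonal `{(v, v)}` is invariant; the matrix acts there as
`F` and on the quotient as `E`, so its characteristic polynomial is `χ_F · χ_E`. Detectability
supplies `G₁`; choosing `H` with `χ_F = P` is pole placement for the controllable pair
`(A + 2ΘR_c, B₂)`. By Heymann's lemma a preliminary feedback makes some `w ∈ range B₂` a cyclic
vector. In the basis of partial Horner evaluations of the characteristic polynomial at `w` the map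
is in controllable canonical form, and a feedback along `w` replaces the coefficients of its
characteristic polynomial by those of `P`.
-/

namespace Polynomial

variable {R : Type*} [Semiring R]

theorem coeff_divX_iterate (p : R[X]) (k n : ℕ) : (divX^[k] p).coeff n = p.coeff (n + k) := by
  induction k generalizing n with
  | zero => rfl
  | succ k ih => rw [Function.iterate_succ_apply', coeff_divX, ih, add_right_comm, add_assoc]

theorem Monic.divX_iterate_natDegree {p : R[X]} (hp : p.Monic) : divX^[p.natDegree] p = 1 := by
  ext n
  rw [coeff_divX_iterate, coeff_one]
  rcases n with _ | n
  · simpa using hp.coeff_natDegree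
  · exact coeff_eq_zero_of_natDegree_lt (by omega)

end Polynomial

namespace Module.End

open Submodule

section CommRing

variable {R M : Type*} [CommRing R] [AddCommGroup M] [Module R M]

/-- Controllability of `(f, W)` in invariant-subspace form: the reachable subspace is everything. -/
def IsControllable (f : Module.End R M) (W : Submodule R M) : Prop :=
  ∀ S ∈ f.invtSubmodule, W ≤ S → S = ⊤

theorem IsControllable.add_of_range_le {f φ : Module.End R M} {W : Submodule R M}
    (hf : f.IsControllable W) (hφ : LinearMap.range φ ≤ W) : (f + φ).IsControllable W := by
  refine fun S hS hWS => hf S (fun v hv => ?_) hWS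
  rw [mem_comap, ← add_sub_cancel_right (f v) (φ v)]
  exact S.sub_mem (hS hv) (hWS (hφ ⟨v, rfl⟩))

/-- For `Q = f.charpoly` these vectors, `k = 1, …, n`, form the basis in which `f` has
controllable canonical form. -/
noncomputable def hornerVec (f : Module.End R M) (Q : R[X]) (w : M) (k : ℕ) : M :=
  aeval f (divX^[k] Q) w

theorem hornerVec_eq_apply_succ (f : Module.End R M) (Q : R[X]) (w : M) (k : ℕ) :
    hornerVec f Q w k = f (hornerVec f Q w (k + 1)) + Q.coeff k • w := by
  conv_lhs => rw [hornerVec, ← divX_mul_X_add (divX^[k] Q), mul_comm]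
  simp [hornerVec, Function.iterate_succ_apply', coeff_divX_iterate, mul_apply]

theorem hornerVec_natDegree (f : Module.End R M) {Q : R[X]} (hQ : Q.Monic) (w : M) :
    hornerVec f Q w Q.natDegree = w := by
  simp [hornerVec, hQ.divX_iterate_natDegree]

theorem IsControllable.span_hornerVec_eq_top {f : Module.End R M} {w : M}
    (hf : f.IsControllable (R ∙ w)) {Q : R[X]} (hQ : Q.Monic) (hQw : aeval f Q w = 0) :
    span R (Set.range fun i : Fin Q.natDegree => hornerVec f Q w (i + 1)) = ⊤ := by
  set S := span R (Set.range fun i : Fin Q.natDegree => hornerVec f Q w (i + 1))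
  have hmem : ∀ k ≤ Q.natDegree, hornerVec f Q w k ∈ S := by
    rintro (_ | k) hk
    · exact (show hornerVec f Q w 0 = 0 from hQw) ▸ S.zero_mem
    · exact subset_span ⟨⟨k, by omega⟩, rfl⟩
  have hw : w ∈ S := hornerVec_natDegree f hQ w ▸ hmem _ le_rfl
  refine hf S (span_le.mpr ?_) ((span_singleton_le_iff_mem _ _).mpr hw)
  rintro _ ⟨i, rfl⟩
  rw [SetLike.mem_coe, mem_comap, ← add_sub_cancel_right (f _) (Q.coeff i • w),
    ← hornerVec_eq_apply_succ]
  exact S.sub_mem (hmem i (by omega)) (S.smul_mem _ hw)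

theorem IsControllable.exists_chain_extension {f : Module.End R M} {W : Submodule R M}
    (hf : f.IsControllable W) {x : ℕ → M} {k : ℕ} (hx : ∀ i < k, x (i + 1) - f (x i) ∈ W)
    (hspan : span R (Set.range fun i : Fin k => x (i + 1)) ≠ ⊤) :
    ∃ y, y - f (x k) ∈ W ∧ y ∉ span R (Set.range fun i : Fin k => x (i + 1)) := by
  set S := span R (Set.range fun i : Fin k => x (i + 1))
  by_contra! h
  have hfx : f (x k) ∈ S := h _ (by simp)
  have hWS : W ≤ S := fun u hu => by
    simpa using S.sub_mem (h (u + f (x k)) (by simpa using hu)) hfx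
  refine hspan (hf S (span_le.mpr ?_) hWS)
  rintro _ ⟨i, rfl⟩
  change f (x (i + 1)) ∈ S
  rcases (show (i : ℕ) + 1 < k ∨ (i : ℕ) + 1 = k by omega) with hi | hi
  · rw [← sub_sub_cancel (x (i + 1 + 1)) (f (x (i + 1)))]
    exact S.sub_mem (subset_span ⟨⟨i + 1, hi⟩, rfl⟩) (hWS (hx _ hi))
  · rwa [hi]

end CommRing

variable {K V : Type*} [Field K] [AddCommGroup V] [Module K V]

theorem IsControllable.charpoly_eq_of_aeval_apply_eq_zero [FiniteDimensional K V]
    {f : Module.End K V} {w : V} (hf : f.IsControllable (K ∙ w)) {P : K[X]} (hP : P.Monic)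
    (hdeg : P.natDegree = finrank K V) (hPw : aeval f P w = 0) : f.charpoly = P := by
  have hcomm : aeval f P * f = f * aeval f P := by
    simpa using ((Commute.all P X).map (aeval f)).eq
  have hPf : aeval f P = 0 := by
    refine LinearMap.ker_eq_top.mp (hf _ (fun v hv => ?_) ((span_singleton_le_iff_mem _ _).mpr hPw))
    simp only [mem_comap, LinearMap.mem_ker] at hv ⊢
    rw [← mul_apply, hcomm, mul_apply, hv, map_zero]
  have hmonic := minpoly.monic (LinearMap.isIntegral f)
  have hmin : finrank K V ≤ (minpoly K f).natDegree := by
    rw [← finrank_top K V, ← hf.span_hornerVec_eq_top hmonic (by simp [minpoly.aeval])]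
    exact (finrank_range_le_card _).trans (by simp)
  rw [eq_of_monic_of_dvd_of_natDegree_le hmonic f.charpoly_monic (LinearMap.minpoly_dvd_charpoly f)
    (by rw [LinearMap.charpoly_natDegree]; omega),
    eq_of_monic_of_dvd_of_natDegree_le hmonic hP (minpoly.dvd K f hPf) (by omega)]

theorem IsControllable.exists_range_le_charpoly_add_eq_of_span_singleton [FiniteDimensional K V]
    {f : Module.End K V} {w : V} (hf : f.IsControllable (K ∙ w)) {P : K[X]} (hP : P.Monic)
    (hdeg : P.natDegree = finrank K V) :
    ∃ ψ : Module.End K V, LinearMap.range ψ ≤ K ∙ w ∧ (f + ψ).charpoly = P := by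
  have ha : f.charpoly.natDegree = finrank K V := f.charpoly_natDegree
  have hz0 : hornerVec f f.charpoly w 0 = 0 := by
    simp [hornerVec, LinearMap.aeval_self_charpoly]
  let b := basisOfTopLeSpanOfCardEqFinrank _ (hf.span_hornerVec_eq_top f.charpoly_monic hz0).ge
    (by simp [ha])
  let ψ := b.constr K fun i => (f.charpoly.coeff i - P.coeff i) • w
  have hψ : LinearMap.range ψ ≤ K ∙ w := by
    rw [Basis.constr_range, span_le]
    rintro _ ⟨i, rfl⟩
    exact smul_mem _ _ (mem_span_singleton_self w)
  have hstep (k : ℕ) (hk : k < finrank K V) : (f + ψ) (hornerVec f f.charpoly w (k + 1)) =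
      hornerVec f f.charpoly w k - P.coeff k • w := by
    have hψz : ψ (hornerVec f f.charpoly w (k + 1)) = (f.charpoly.coeff k - P.coeff k) • w := by
      simpa [b] using b.constr_basis K _ ⟨k, by omega⟩
    rw [LinearMap.add_apply, hψz, hornerVec_eq_apply_succ f _ w k]
    module
  have hagree (k : ℕ) (hk : k ≤ finrank K V) :
      hornerVec (f + ψ) P w k = hornerVec f f.charpoly w k := by
    induction hk using Nat.decreasingInduction with
    | self =>
      rw [← hdeg, hornerVec_natDegree _ hP, hdeg, ← ha, hornerVec_natDegree _ f.charpoly_monic]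
    | of_succ k hk ih => rw [hornerVec_eq_apply_succ, ih, hstep k hk, sub_add_cancel]
  exact ⟨ψ, hψ, (hf.add_of_range_le hψ).charpoly_eq_of_aeval_apply_eq_zero hP hdeg
    ((hagree 0 (Nat.zero_le _)).trans hz0)⟩

/-- Setting `x 0 = 0` makes the first link condition read `x 1 ∈ W`. -/
theorem IsControllable.exists_chain {f : Module.End K V} {W : Submodule K V}
    (hf : f.IsControllable W) {k : ℕ} (hk : k ≤ finrank K V) :
    ∃ x : ℕ → V, x 0 = 0 ∧ (∀ i < k, x (i + 1) - f (x i) ∈ W) ∧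
      LinearIndependent K (fun i : Fin k => x (i + 1)) := by
  induction k with
  | zero => exact ⟨0, rfl, by simp, linearIndependent_empty_type⟩
  | succ k ih =>
    obtain ⟨x, hx0, hx, hli⟩ := ih (by omega)
    have hspan : span K (Set.range fun i : Fin k => x (i + 1)) ≠ ⊤ := fun htop => by
      have := finrank_range_le_card (R := K) fun i : Fin k => x (i + 1)
      rw [Set.finrank, htop, finrank_top, Fintype.card_fin] at this
      omega
    obtain ⟨y, hyW, hy⟩ := hf.exists_chain_extension hx hspan
    have hinit : Fin.init (fun i : Fin (k + 1) => Function.update x (k + 1) y (i + 1)) =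
        fun i : Fin k => x (i + 1) :=
      funext fun i => Function.update_of_ne (by simpa using i.isLt.ne) _ _
    refine ⟨Function.update x (k + 1) y, by simp [hx0], fun i hi => ?_,
      linearIndependent_finSucc'.mpr ⟨hinit ▸ hli, hinit ▸ by simpa using hy⟩⟩
    rcases (show i < k ∨ i = k by omega) with hi | rfl
    · simpa [Function.update_of_ne (show i + 1 ≠ k + 1 by omega),
        Function.update_of_ne (show i ≠ k + 1 by omega)] using hx i hi
    · simpa using hyW

/-- Heymann's lemma. -/
theorem IsControllable.exists_isControllable_add_span_singleton [FiniteDimensional K V]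
    {f : Module.End K V} {W : Submodule K V} (hf : f.IsControllable W) :
    ∃ w ∈ W, ∃ φ : Module.End K V,
      LinearMap.range φ ≤ W ∧ (f + φ).IsControllable (K ∙ w) := by
  rcases (finrank K V).eq_zero_or_pos with hn | hn
  · have := finrank_zero_iff.mp hn
    exact ⟨0, W.zero_mem, 0, by simp, fun S _ _ => Subsingleton.elim _ _⟩
  obtain ⟨x, hx0, hx, hli⟩ := hf.exists_chain le_rfl
  have hspan := hli.span_eq_top_of_card_eq_finrank' (Fintype.card_fin _)
  let b := Basis.mk hli hspan.ge
  let φ := b.constr K fun i => if (i : ℕ) + 1 < finrank K V then x (i + 2) - f (x (i + 1)) else 0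
  have hφ : LinearMap.range φ ≤ W := by
    rw [Basis.constr_range, span_le]
    rintro _ ⟨i, rfl⟩
    dsimp only
    split_ifs with hi
    · exact hx _ hi
    · exact W.zero_mem
  have hstep (i : ℕ) (hi : i + 1 < finrank K V) : (f + φ) (x (i + 1)) = x (i + 2) := by
    have hφx := b.constr_basis K (fun i : Fin (finrank K V) =>
      if (i : ℕ) + 1 < finrank K V then x (i + 2) - f (x (i + 1)) else 0) ⟨i, by omega⟩
    rw [Basis.mk_apply, if_pos hi] at hφx
    rw [LinearMap.add_apply, hφx, add_sub_cancel]
  refine ⟨x 1, by simpa [hx0] using hx 0 hn, φ, hφ, fun S hS hwS => ?_⟩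
  have hmem (i : ℕ) (hi : i < finrank K V) : x (i + 1) ∈ S := by
    induction i with
    | zero => exact (span_singleton_le_iff_mem _ _).mp hwS
    | succ i ih => exact hstep i hi ▸ hS (ih (by omega))
  rw [eq_top_iff, ← hspan, span_le]
  rintro _ ⟨i, rfl⟩
  exact hmem i i.isLt

theorem IsControllable.exists_range_le_charpoly_add_eq [FiniteDimensional K V]
    {f : Module.End K V} {W : Submodule K V} (hf : f.IsControllable W) {P : K[X]} (hP : P.Monic)
    (hdeg : P.natDegree = finrank K V) :
    ∃ χ : Module.End K V, LinearMap.range χ ≤ W ∧ (f + χ).charpoly = P := by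
  obtain ⟨w, hwW, φ, hφ, hcyc⟩ := hf.exists_isControllable_add_span_singleton
  obtain ⟨ψ, hψ, hchar⟩ := hcyc.exists_range_le_charpoly_add_eq_of_span_singleton hP hdeg
  refine ⟨φ + ψ, ?_, by rwa [← add_assoc]⟩
  rintro _ ⟨v, rfl⟩
  exact W.add_mem (hφ ⟨v, rfl⟩) ((span_singleton_le_iff_mem _ _).mpr hwW (hψ ⟨v, rfl⟩))

end Module.End

theorem Controllable.isControllable {ι κ : Type*} [Fintype ι] [Fintype κ] [DecidableEq ι]
    {M : Matrix ι ι ℝ} {B : Matrix ι κ ℝ} (h : Controllable M B) :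
    Module.End.IsControllable M.mulVecLin (LinearMap.range B.mulVecLin) := by
  intro S hS hBS
  have hcols : Submodule.span ℝ (Set.range (of fun (i : ι) (jk : Fin (Fintype.card ι) × κ) =>
      (M ^ (jk.1 : ℕ) * B) i jk.2).col) = ⊤ := by
    apply Submodule.eq_top_of_finrank_eq
    rw [← rank_eq_finrank_span_cols, Module.finrank_fintype_fun_eq_card]
    exact h
  rw [eq_top_iff, ← hcols, Submodule.span_le]
  rintro _ ⟨⟨j, k⟩, rfl⟩
  have hcol : (of fun (i : ι) (jk : Fin (Fintype.card ι) × κ) =>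
      (M ^ (jk.1 : ℕ) * B) i jk.2).col (j, k) = (M.mulVecLin ^ (j : ℕ)) (B.col k) := by
    rw [← toLin'_apply', ← toLin'_pow, toLin'_apply]
    ext i
    simp [mul_apply, mulVec, dotProduct]
  have hBk : B.col k ∈ S := hBS (by rw [range_mulVecLin]; exact Submodule.subset_span ⟨k, rfl⟩)
  rw [SetLike.mem_coe, hcol]
  exact Module.End.pow_apply_mem_of_forall_mem (p := S) _ (fun _ hv => hS hv) _ hBk

namespace Matrix

theorem exists_charpoly_add_mul_eq {K ι κ : Type*} [Field K] [Fintype ι] [DecidableEq ι]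
    [Fintype κ] {M : Matrix ι ι K} {B : Matrix ι κ K}
    (hc : Module.End.IsControllable M.mulVecLin (LinearMap.range B.mulVecLin)) {P : K[X]}
    (hP : P.Monic) (hdeg : P.natDegree = Fintype.card ι) :
    ∃ H : Matrix κ ι K, (M + B * H).charpoly = P := by
  obtain ⟨χ, hχ, hchar⟩ := hc.exists_range_le_charpoly_add_eq hP (by simpa using hdeg)
  obtain ⟨L, hL⟩ := Module.projective_lifting_property B.mulVecLin.rangeRestrict
    (χ.codRestrict _ fun v => hχ ⟨v, rfl⟩) (LinearMap.surjective_rangeRestrict _)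
  have hBL : B.mulVecLin ∘ₗ L = χ :=
    LinearMap.ext fun v => congrArg Subtype.val (LinearMap.congr_fun hL v)
  have hH : (LinearMap.toMatrix' L).mulVecLin = L := by rw [← toLin'_apply', toLin'_toMatrix']
  refine ⟨LinearMap.toMatrix' L, ?_⟩
  rw [← charpoly_toLin', toLin'_apply', mulVecLin_add, mulVecLin_mul, hH, hBL, hchar]

theorem charpoly_fromBlocks_of_add_eq {R n : Type*} [CommRing R] [Fintype n] [DecidableEq n]
    {X Y Z W : Matrix n n R} (h : X + Y = Z + W) :
    (fromBlocks X Y Z W).charpoly = (X + Y).charpoly * (W - Y).charpoly := by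
  set T : Matrix (n ⊕ n) (n ⊕ n) R := fromBlocks 1 0 1 (-1)
  have hT : T * T = 1 := by simp [T, fromBlocks_multiply, ← fromBlocks_one]
  have hconj : fromBlocks X Y Z W = T * fromBlocks (X + Y) (-Y) 0 (W - Y) * T := by
    simp only [T, fromBlocks_multiply, eq_sub_of_add_eq h.symm]
    congr 1 <;> simp
    abel
  rw [hconj, mul_assoc, charpoly_mul_comm, mul_assoc, hT, mul_one, charpoly_fromBlocks_zero₂₁]

end Matrix

/-- Separation principle / pole placement: under detectability of
`(A − 2ΘR_c, C)` and controllability of `(A + 2ΘR_c, B₂)` (with `R_c` symmetric),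
every monic degree-`n` real polynomial `P` can be realized as the regulator part of
the closed-loop characteristic polynomial, with a Hurwitz observer error matrix. -/
theorem observer_based_pole_placement (m p q : ℕ)
    (A : Matrix (Fin m × Fin 2) (Fin m × Fin 2) ℝ)
    (C : Matrix (Fin p × Fin 2) (Fin m × Fin 2) ℝ)
    (B₂ : Matrix (Fin m × Fin 2) (Fin q × Fin 2) ℝ)
    (Rc : Matrix (Fin m × Fin 2) (Fin m × Fin 2) ℝ) (hRc : Rc = Rcᵀ)
    (hdet : ∃ G₁ : Matrix (Fin m × Fin 2) (Fin p × Fin 2) ℝ,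
      IsHurwitz (A - G₁ * C - 2 • (Theta m * Rc)))
    (hctrb : Controllable (A + 2 • (Theta m * Rc)) B₂)
    (P : Polynomial ℝ) (hmonic : P.Monic)
    (hdeg : P.natDegree = Fintype.card (Fin m × Fin 2)) :
    ∃ (G₁ : Matrix (Fin m × Fin 2) (Fin p × Fin 2) ℝ)
      (H : Matrix (Fin q × Fin 2) (Fin m × Fin 2) ℝ),
      (fromBlocks A (B₂ * H + 2 • (Theta m * Rc)) (G₁ * C + 2 • (Theta m * Rcᵀ))
          (A - G₁ * C + B₂ * H)).charpoly =
        P * (A - G₁ * C - 2 • (Theta m * Rc)).charpoly ∧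
      (A + B₂ * H + 2 • (Theta m * Rc)).charpoly = P ∧
      IsHurwitz (A - G₁ * C - 2 • (Theta m * Rc)) := by
  obtain ⟨G₁, hG₁⟩ := hdet
  obtain ⟨H, hH⟩ := exists_charpoly_add_mul_eq hctrb.isControllable hmonic hdeg
  have hF : (A + B₂ * H + 2 • (Theta m * Rc)).charpoly = P := by rwa [add_right_comm]
  refine ⟨G₁, H, ?_, hF, hG₁⟩
  rw [← hRc, charpoly_fromBlocks_of_add_eq (by abel), ← add_assoc, hF]
  congr 2
  abel
end
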